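/- arXiv:1907.02465 — 6 statements merged into one kernel-verified Lean document; each statement's English description precedes it below -/
import Mathlib

section
/- Let G be an undirected weighted graph on nodes {1,...,N} (N ≥ 2) with nonnegative edge weights w_{ij} = w_{ji} ≤ w_max, and suppose node 1 has at most q neighbors. Let L̄ be the grounded Laplacian obtained by deleting the first row and column of the graph Laplacian L. Then the smallest eigenvalue λ̄_1 of L̄ satisfies λ̄_1 ≤ q · w_max/(N−1). -/
/-!
Test the smallest eigenvalue against the Rayleigh quotient of the all-ones vector `𝟙`. The
Laplacian is symmetric with zero row sums, so the entries of the grounded Laplacian `L̄` add up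
to `L₁₁ = ∑ₖ w₁ₖ`, a sum of at most `q` nonzero weights, each at most `w_max`; on the other hand
`λ̄₁ · (N - 1) = λ̄₁ ‖𝟙‖² ≤ 𝟙ᵀ L̄ 𝟙`.
-/

open Matrix Finset

namespace Matrix

variable {n 𝕜 : Type*} [Fintype n] [DecidableEq n] [RCLike 𝕜]

open scoped MatrixOrder in
theorem IsHermitian.iInf_eigenvalues_mul_re_dotProduct_le {A : Matrix n n 𝕜}
    (hA : A.IsHermitian) (x : n → 𝕜) :
    (⨅ i, hA.eigenvalues i) * RCLike.re (star x ⬝ᵥ x) ≤ RCLike.re (star x ⬝ᵥ A *ᵥ x) := by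
  have hle : algebraMap ℝ (Matrix n n 𝕜) (⨅ i, hA.eigenvalues i) ≤ A := by
    refine algebraMap_le_of_le_spectrum (fun r hr => ?_) hA.isSelfAdjoint
    obtain ⟨i, rfl⟩ := hA.spectrum_real_eq_range_eigenvalues ▸ hr
    exact ciInf_le (Finite.bddBelow_range _) i
  simpa [sub_mulVec, dotProduct_sub, Algebra.algebraMap_eq_smul_one, smul_mulVec,
    dotProduct_smul, RCLike.smul_re] using (le_iff.mp hle).re_dotProduct_nonneg x

theorem sum_apply_succ_succ_eq_apply_zero_zero {R : Type*} [AddCommGroup R] {m : ℕ}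
    {L : Matrix (Fin (m + 1)) (Fin (m + 1)) R} (hL : L.IsSymm) (hrow : ∀ i, ∑ j, L i j = 0) :
    ∑ i : Fin m, ∑ j : Fin m, L i.succ j.succ = L 0 0 := by
  have hrow_succ (i : Fin m) : ∑ j : Fin m, L i.succ j.succ = -L 0 i.succ := by
    rw [← hL.apply, eq_neg_iff_add_eq_zero, add_comm, ← Fin.sum_univ_succ, hrow]
  rw [sum_congr rfl fun i _ => hrow_succ i, sum_neg_distrib, neg_eq_iff_add_eq_zero, add_comm,
    ← Fin.sum_univ_succ, hrow]

end Matrix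

section WeightedLaplacian

variable {ι R : Type*} [Fintype ι] [DecidableEq ι]

def weightedLaplacian [AddCommGroup R] (w : ι → ι → R) : Matrix ι ι R :=
  Matrix.of fun i j => if i = j then ∑ k ∈ univ.filter (· ≠ i), w i k else -w i j

theorem sum_weightedLaplacian_row [AddCommGroup R] (w : ι → ι → R) (i : ι) :
    ∑ j, weightedLaplacian w i j = 0 := by
  have hoff : ∑ j ∈ univ.filter (· ≠ i), weightedLaplacian w i j
      = -∑ j ∈ univ.filter (· ≠ i), w i j := by
    rw [← sum_neg_distrib]
    exact sum_congr rfl fun j hj => if_neg (mem_filter.mp hj).2.symm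
  rw [← sum_erase_add _ _ (mem_univ i), ← filter_ne', hoff]
  simp [weightedLaplacian]

theorem weightedLaplacian_isSymm [AddCommGroup R] {w : ι → ι → R} (hw : ∀ i j, w i j = w j i) :
    (weightedLaplacian w).IsSymm := by
  refine IsSymm.ext fun i j => ?_
  by_cases h : i = j
  · subst h
    rfl
  · simp [weightedLaplacian, h, Ne.symm h, hw i j]

theorem weightedLaplacian_self_le [LinearOrder R] [AddCommGroup R] [IsOrderedAddMonoid R]
    {w : ι → ι → R} {c : R} (i : ι) (hc : 0 ≤ c) (hw : ∀ j, w i j ≤ c) :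
    weightedLaplacian w i i ≤ #{j | w i j ≠ 0} • c := calc
  weightedLaplacian w i i = ∑ j ∈ univ.filter (· ≠ i), w i j := if_pos rfl
  _ = ∑ j ∈ (univ.filter (· ≠ i)).filter (w i · ≠ 0), w i j := (sum_filter_ne_zero _).symm
  _ ≤ #((univ.filter (· ≠ i)).filter (w i · ≠ 0)) • c :=
    sum_le_card_nsmul _ _ _ fun j _ => hw j
  _ ≤ #{j | w i j ≠ 0} • c :=
    nsmul_le_nsmul_left hc (card_le_card (filter_subset_filter _ (subset_univ _)))

end WeightedLaplacian

/-- The smallest eigenvalue of the grounded Laplacian (the Laplacian with the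
leader's row and column deleted) is at most `q · w_max / (N - 1)` when the
leader node has at most `q` neighbors and all weights are at most `w_max`. -/
theorem grounded_laplacian_smallest_eigenvalue_bound (N q : ℕ) (hN : 2 ≤ N)
    (wmax : ℝ) (w : Fin N → Fin N → ℝ)
    (hsymm : ∀ i j, w i j = w j i)
    (hnonneg : ∀ i j, 0 ≤ w i j)
    (hbd : ∀ i j, w i j ≤ wmax)
    (hq : (Finset.univ.filter (fun j : Fin N => w ⟨0, by omega⟩ j ≠ 0)).card ≤ q)
    (L : Matrix (Fin N) (Fin N) ℝ)
    (hL : ∀ i j, L i j =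
      if i = j then ∑ k ∈ Finset.univ.filter (· ≠ i), w i k else -(w i j))
    (Lbar : Matrix (Fin (N - 1)) (Fin (N - 1)) ℝ)
    (hLbar : ∀ i j, Lbar i j =
      L ⟨i.val + 1, by omega⟩ ⟨j.val + 1, by omega⟩)
    (hHerm : Lbar.IsHermitian) :
    (⨅ i, hHerm.eigenvalues i) ≤ (q : ℝ) * wmax / ((N : ℝ) - 1) := by
  obtain ⟨m, rfl⟩ : ∃ m, N = m + 1 := ⟨N - 1, by omega⟩
  obtain rfl : L = weightedLaplacian w := Matrix.ext hL
  have hLbar' : Lbar = (weightedLaplacian w).submatrix Fin.succ Fin.succ := Matrix.ext hLbar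
  have hform : 1 ⬝ᵥ Lbar *ᵥ 1 = weightedLaplacian w 0 0 := by
    simpa [hLbar', mulVec, dotProduct] using sum_apply_succ_succ_eq_apply_zero_zero
      (weightedLaplacian_isSymm hsymm) (sum_weightedLaplacian_row w)
  have hwmax : 0 ≤ wmax := (hnonneg 0 0).trans (hbd 0 0)
  have hdegree : weightedLaplacian w 0 0 ≤ q * wmax := by
    refine (weightedLaplacian_self_le 0 hwmax (hbd 0)).trans ?_
    rw [nsmul_eq_mul]
    gcongr
    exact hq
  have hrayleigh := hHerm.iInf_eigenvalues_mul_re_dotProduct_le 1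
  simp only [star_trivial, one_dotProduct_one, Fintype.card_fin, Nat.add_one_sub_one,
    RCLike.natCast_re, RCLike.re_to_real] at hrayleigh
  rw [le_div_iff₀ (by simp; omega), Nat.cast_add_one, add_sub_cancel_right]
  exact hrayleigh.trans (hform.le.trans hdegree)
end

section
/- Let λ be a complex number and a_0, a_1, a_2 positive reals, and consider the polynomial p(s) = s³ + a_2 λ s² + a_1 λ s + a_0 λ. If Re(λ) > 0, a_2 Re(λ) > 0, and a_2(Re λ)²(a_2 a_1 Re λ − a_0) + a_1 (Im λ)²(a_2² Re λ − a_1) < 0, then p has a root s with Re(s) ≥ 0. -/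
open Complex

set_option maxHeartbeats 1000000

/-- Complex-coefficient Routh–Hurwitz, third-order case: if the second Hurwitz
determinant condition is strictly violated, the cubic
`s³ + a₂ λ s² + a₁ λ s + a₀ λ` has a root with nonnegative real part. -/
theorem cubic_complex_unstable_of_routh_hurwitz_fails (lam : ℂ) (a0 a1 a2 : ℝ)
    (ha0 : 0 < a0) (ha1 : 0 < a1) (ha2 : 0 < a2)
    (hre : 0 < lam.re) (hre2 : 0 < a2 * lam.re)
    (hRH : a2 * lam.re ^ 2 * (a2 * a1 * lam.re - a0)
        + a1 * lam.im ^ 2 * (a2 ^ 2 * lam.re - a1) < 0) :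
    ∃ s : ℂ, s ^ 3 + (a2 : ℂ) * lam * s ^ 2 + (a1 : ℂ) * lam * s + (a0 : ℂ) * lam = 0
      ∧ 0 ≤ s.re := by
  by_contra hcon
  push_neg at hcon
  -- hcon : ∀ s, eq → s.re < 0
  -- Step 1: factor the cubic
  obtain ⟨r1, hr1⟩ := Complex.exists_root
    (f := Polynomial.C (1:ℂ) * Polynomial.X ^ 3 + Polynomial.C ((a2:ℂ)*lam) * Polynomial.X ^ 2
      + Polynomial.C ((a1:ℂ)*lam) * Polynomial.X + Polynomial.C ((a0:ℂ)*lam))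
    (by rw [Polynomial.degree_cubic one_ne_zero]; norm_num)
  have hroot : r1 ^ 3 + (a2:ℂ)*lam*r1^2 + (a1:ℂ)*lam*r1 + (a0:ℂ)*lam = 0 := by
    have h := hr1
    simp [Polynomial.IsRoot] at h
    linear_combination h
  obtain ⟨w, hw⟩ := IsAlgClosed.exists_pow_nat_eq (k := ℂ)
    (((a2:ℂ)*lam + r1)^2 - 4*(r1^2 + (a2:ℂ)*lam*r1 + (a1:ℂ)*lam)) (n := 2) (by norm_num)
  obtain ⟨r2, r3, hfact⟩ :
      ∃ r2 r3 : ℂ, ∀ s : ℂ, s ^ 3 + (a2:ℂ)*lam*s^2 + (a1:ℂ)*lam*s + (a0:ℂ)*lam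
        = (s - r1) * (s - r2) * (s - r3) :=
    ⟨(-((a2:ℂ)*lam + r1) + w)/2, (-((a2:ℂ)*lam + r1) - w)/2,
      fun s => by linear_combination hroot + ((s - r1)/4) * hw⟩
  -- Step 2: all roots have negative real part
  have h1 : r1.re < 0 := hcon r1 (by rw [hfact r1]; ring)
  have h2 : r2.re < 0 := hcon r2 (by rw [hfact r2]; ring)
  have h3 : r3.re < 0 := hcon r3 (by rw [hfact r3]; ring)
  -- Step 3: Vieta
  have hb2 : (a2:ℂ)*lam = -(r1 + r2 + r3) := by
    linear_combination (hfact 1)/2 + (hfact (-1))/2 - hfact 0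
  have hb1 : (a1:ℂ)*lam = r1*r2 + r1*r3 + r2*r3 := by
    linear_combination (hfact 1)/2 - (hfact (-1))/2
  -- real/imaginary parts of lam
  obtain ⟨X, Y, hlam, hX, hY⟩ : ∃ X Y : ℝ, lam = (X:ℂ) + (Y:ℂ)*I ∧ lam.re = X ∧ lam.im = Y :=
    ⟨lam.re, lam.im, (Complex.re_add_im lam).symm, rfl, rfl⟩
  rw [hX] at hre hre2
  rw [hX, hY] at hRH
  -- Step 4: positivity of Re(conj(p(iω)) * p'(iω)) for all real ω
  have key : ∀ ω : ℝ, 0 <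
      ((starRingEnd ℂ) ((I*(ω:ℂ))^3 + (a2:ℂ)*lam*(I*(ω:ℂ))^2 + (a1:ℂ)*lam*(I*(ω:ℂ)) + (a0:ℂ)*lam)
        * (3*(I*(ω:ℂ))^2 + 2*((a2:ℂ)*lam)*(I*(ω:ℂ)) + (a1:ℂ)*lam)).re := by
    intro ω
    have hz : ∀ r : ℂ, r.re < 0 → (I*(ω:ℂ) - r) ≠ 0 := by
      intro r hr h0
      have : (I*(ω:ℂ) - r).re = -r.re := by simp
      rw [h0] at this
      simp at this
      linarith
    have n1 : 0 < Complex.normSq (I*(ω:ℂ) - r1) := Complex.normSq_pos.2 (hz r1 h1)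
    have n2 : 0 < Complex.normSq (I*(ω:ℂ) - r2) := Complex.normSq_pos.2 (hz r2 h2)
    have n3 : 0 < Complex.normSq (I*(ω:ℂ) - r3) := Complex.normSq_pos.2 (hz r3 h3)
    have hsum : (3:ℂ)*(I*(ω:ℂ))^2 + 2*((a2:ℂ)*lam)*(I*(ω:ℂ)) + (a1:ℂ)*lam
        = (I*(ω:ℂ) - r1)*(I*(ω:ℂ) - r2) + (I*(ω:ℂ) - r1)*(I*(ω:ℂ) - r3)
          + (I*(ω:ℂ) - r2)*(I*(ω:ℂ) - r3) := by
      linear_combination 2*(I*(ω:ℂ))*hb2 + hb1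
    have hrw : ((starRingEnd ℂ) ((I*(ω:ℂ))^3 + (a2:ℂ)*lam*(I*(ω:ℂ))^2 + (a1:ℂ)*lam*(I*(ω:ℂ)) + (a0:ℂ)*lam)
        * (3*(I*(ω:ℂ))^2 + 2*((a2:ℂ)*lam)*(I*(ω:ℂ)) + (a1:ℂ)*lam))
        = (starRingEnd ℂ) (I*(ω:ℂ) - r1) * ((Complex.normSq (I*(ω:ℂ) - r2) : ℂ) * (Complex.normSq (I*(ω:ℂ) - r3) : ℂ))
        + (starRingEnd ℂ) (I*(ω:ℂ) - r2) * ((Complex.normSq (I*(ω:ℂ) - r1) : ℂ) * (Complex.normSq (I*(ω:ℂ) - r3) : ℂ))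
        + (starRingEnd ℂ) (I*(ω:ℂ) - r3) * ((Complex.normSq (I*(ω:ℂ) - r1) : ℂ) * (Complex.normSq (I*(ω:ℂ) - r2) : ℂ)) := by
      rw [hfact (I*(ω:ℂ)), hsum]
      simp only [← Complex.mul_conj, map_mul]
      ring
    rw [hrw]
    have hterm : ∀ (r : ℂ) (a b : ℝ),
        ((starRingEnd ℂ) (I*(ω:ℂ) - r) * ((a:ℂ) * (b:ℂ))).re = (-r.re) * (a*b) := by
      intro r a b
      simp [Complex.mul_re]
    rw [Complex.add_re, Complex.add_re, hterm, hterm, hterm]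
    have := mul_pos n2 n3
    have := mul_pos n1 n3
    have := mul_pos n1 n2
    nlinarith
  -- Step 5: closed form of the same quantity
  have hclosed : ∀ ω : ℝ,
      ((starRingEnd ℂ) ((I*(ω:ℂ))^3 + (a2:ℂ)*lam*(I*(ω:ℂ))^2 + (a1:ℂ)*lam*(I*(ω:ℂ)) + (a0:ℂ)*lam)
        * (3*(I*(ω:ℂ))^2 + 2*((a2:ℂ)*lam)*(I*(ω:ℂ)) + (a1:ℂ)*lam)).re
      = a2*X*ω^4 + 2*a1*Y*ω^3 + (a1*a2*(X^2+Y^2) - 3*a0*X)*ω^2 + a0*a1*(X^2+Y^2) := by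
    intro ω
    rw [hlam]
    simp only [map_add, map_mul, map_pow, map_ofNat, Complex.conj_I, Complex.conj_ofReal]
    simp [Complex.mul_re, Complex.mul_im, Complex.add_re, Complex.add_im, pow_succ]
    ring
  -- Step 6: the two test frequencies
  have hdisc : 0 < a1^2*Y^2 + 4*a0*a2*X^2 := by nlinarith [sq_nonneg (a1*Y), mul_pos (mul_pos ha0 ha2) (mul_pos hre hre)]
  set sq := Real.sqrt (a1^2*Y^2 + 4*a0*a2*X^2) with hsqdef
  have hsq : sq^2 = a1^2*Y^2 + 4*a0*a2*X^2 := Real.sq_sqrt hdisc.le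
  have h2aX : (0:ℝ) < 2*a2*X := by linarith
  -- the sum identity
  have hNsum :
      (a2*X*(-a1*Y + sq)^4 + 2*a1*Y*(-a1*Y + sq)^3*(2*a2*X)
        + (a1*a2*(X^2+Y^2) - 3*a0*X)*(-a1*Y + sq)^2*(2*a2*X)^2 + a0*a1*(X^2+Y^2)*(2*a2*X)^4)
      + (a2*X*(-a1*Y - sq)^4 + 2*a1*Y*(-a1*Y - sq)^3*(2*a2*X)
        + (a1*a2*(X^2+Y^2) - 3*a0*X)*(-a1*Y - sq)^2*(2*a2*X)^2 + a0*a1*(X^2+Y^2)*(2*a2*X)^4)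
      = 16*(a2*X)*(a1^2*Y^2 + 4*a0*a2*X^2)
          * (a2*X^2*(a2*a1*X - a0) + a1*Y^2*(a2^2*X - a1)) := by
    linear_combination (2*a2*X*sq^2 + 8*a1*a2^3*X^2*Y^2 + 8*a1*a2^3*X^4
      - 10*a1^2*a2*X*Y^2 - 16*a0*a2^2*X^3) * hsq
  -- relate to values at ω± = (-a1 Y ± sq)/(2 a2 X)
  have hGp := key ((-a1*Y + sq)/(2*a2*X))
  have hGm := key ((-a1*Y - sq)/(2*a2*X))
  rw [hclosed] at hGp hGm
  have hne : (2*a2*X) ≠ 0 := ne_of_gt h2aX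
  have hEp : a2*X*(-a1*Y + sq)^4 + 2*a1*Y*(-a1*Y + sq)^3*(2*a2*X)
        + (a1*a2*(X^2+Y^2) - 3*a0*X)*(-a1*Y + sq)^2*(2*a2*X)^2 + a0*a1*(X^2+Y^2)*(2*a2*X)^4
      = (2*a2*X)^4 * (a2*X*((-a1*Y + sq)/(2*a2*X))^4 + 2*a1*Y*((-a1*Y + sq)/(2*a2*X))^3
        + (a1*a2*(X^2+Y^2) - 3*a0*X)*((-a1*Y + sq)/(2*a2*X))^2 + a0*a1*(X^2+Y^2)) := by
    field_simp
  have hEm : a2*X*(-a1*Y - sq)^4 + 2*a1*Y*(-a1*Y - sq)^3*(2*a2*X)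
        + (a1*a2*(X^2+Y^2) - 3*a0*X)*(-a1*Y - sq)^2*(2*a2*X)^2 + a0*a1*(X^2+Y^2)*(2*a2*X)^4
      = (2*a2*X)^4 * (a2*X*((-a1*Y - sq)/(2*a2*X))^4 + 2*a1*Y*((-a1*Y - sq)/(2*a2*X))^3
        + (a1*a2*(X^2+Y^2) - 3*a0*X)*((-a1*Y - sq)/(2*a2*X))^2 + a0*a1*(X^2+Y^2)) := by
    field_simp
  have hpow : (0:ℝ) < (2*a2*X)^4 := by positivity
  have hp1 := mul_pos hpow hGp
  have hp2 := mul_pos hpow hGm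
  rw [← hEp] at hp1
  rw [← hEm] at hp2
  have hneg : 16*(a2*X)*(a1^2*Y^2 + 4*a0*a2*X^2)
      * (a2*X^2*(a2*a1*X - a0) + a1*Y^2*(a2^2*X - a1)) < 0 :=
    mul_neg_of_pos_of_neg (by positivity) hRH
  linarith [hNsum, hp1, hp2, hneg]
end

section
/- Let λ > 0 be real and a_0, a_1, a_2 positive reals. All roots of the polynomial p(s) = s³ + a_2 λ s² + a_1 λ s + a_0 λ have negative real part if and only if a_2 a_1 λ − a_0 > 0. -/
open Complex


/-- Generic cubic Routh-Hurwitz. -/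
theorem cubic_aux (c2 c1 c0 : ℝ) (h2 : 0 < c2) (h1 : 0 < c1) (h0 : 0 < c0) :
    (∀ s : ℂ, s ^ 3 + (c2 : ℂ) * s ^ 2 + (c1 : ℂ) * s + (c0 : ℂ) = 0 → s.re < 0)
      ↔ c2 * c1 - c0 > 0 := by
  -- real root via IVT
  obtain ⟨r, hr, hfr⟩ : ∃ r : ℝ, 0 < r ∧ (-r)^3 + c2*(-r)^2 + c1*(-r) + c0 = 0 := by
    set M := 1 + c2 + c1 + c0 with hM
    have hM1 : 1 ≤ M := by nlinarith
    have hcont : ContinuousOn (fun x : ℝ => x^3 + c2*x^2 + c1*x + c0) (Set.Icc (-M) 0) := by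
      fun_prop
    have hsub := intermediate_value_Icc (a := -M) (b := 0) (by linarith) hcont
    have h0mem : (0:ℝ) ∈ Set.Icc ((fun x : ℝ => x^3 + c2*x^2 + c1*x + c0) (-M))
        ((fun x : ℝ => x^3 + c2*x^2 + c1*x + c0) 0) := by
      constructor
      · simp only
        nlinarith [sq_nonneg M, sq_nonneg (M-1)]
      · simp only
        nlinarith
    obtain ⟨x, hx, hfx⟩ := hsub h0mem
    simp only at hfx
    refine ⟨-x, ?_, by simpa using hfx⟩
    rcases lt_or_eq_of_le hx.2 with h | h
    · linarith
    · exfalso; rw [h] at hfx; norm_num at hfx; nlinarith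
  set b := c2 - r with hbdef
  set c := c0 / r with hcdef
  have hc : 0 < c := div_pos h0 hr
  have hcr : c * r = c0 := div_mul_cancel₀ _ (ne_of_gt hr)
  have hc1' : c + b * r = c1 := by
    have hmul : (c + b * r) * r = c1 * r := by
      rw [hbdef]; linear_combination hcr + hfr
    exact mul_right_cancel₀ (ne_of_gt hr) hmul
  have hfac : ∀ s : ℂ, s ^ 3 + (c2 : ℂ) * s ^ 2 + (c1 : ℂ) * s + (c0 : ℂ)
      = (s + (r:ℂ)) * (s^2 + (b:ℂ) * s + (c:ℂ)) := by
    intro s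
    have h1' : (c1 : ℂ) = (c:ℂ) + (b:ℂ) * (r:ℂ) := by exact_mod_cast hc1'.symm
    have h0' : (c0 : ℂ) = (c:ℂ) * (r:ℂ) := by exact_mod_cast hcr.symm
    have h2' : (c2 : ℂ) = (b:ℂ) + (r:ℂ) := by rw [hbdef]; push_cast; ring
    rw [h1', h0', h2']; ring
  have hkey : b * (c1 + r^2) = c2 * c1 - c0 := by
    rw [hbdef]; linear_combination hfr
  have hquad_neg : ∀ s : ℂ, 0 < b → s^2 + (b:ℂ)*s + (c:ℂ) = 0 → s.re < 0 := by
    intro s hb hs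
    have hre : s.re^2 - s.im^2 + b * s.re + c = 0 := by
      have h := congrArg Complex.re hs
      simp only [Complex.add_re, Complex.mul_re, Complex.ofReal_re, Complex.ofReal_im,
        Complex.zero_re, pow_two] at h
      linarith [h]
    have him : 2 * s.re * s.im + b * s.im = 0 := by
      have h := congrArg Complex.im hs
      simp only [Complex.add_im, Complex.mul_im, Complex.ofReal_re, Complex.ofReal_im,
        Complex.zero_im, pow_two] at h
      linarith [h]
    by_contra hx
    push_neg at hx
    rcases eq_or_ne s.im 0 with hy | hy
    · rw [hy] at hre; nlinarith
    · have h2' : s.im * (2 * s.re + b) = 0 := by linear_combination him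
      rcases mul_eq_zero.mp h2' with h | h
      · exact hy h
      · linarith
  have hquad_root : b ≤ 0 → ∃ s : ℂ, s^2 + (b:ℂ)*s + (c:ℂ) = 0 ∧ 0 ≤ s.re := by
    intro hb
    by_cases hd : 0 ≤ b^2 - 4*c
    · set w := Real.sqrt (b^2 - 4*c) with hw
      have hw2 : (w:ℂ)^2 = (b:ℂ)^2 - 4*(c:ℂ) := by
        have := Real.sq_sqrt hd
        exact_mod_cast this
      refine ⟨(((-b + w)/2 : ℝ) : ℂ), ?_, ?_⟩
      · push_cast
        linear_combination (1/4 : ℂ) * hw2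
      · simp only [Complex.ofReal_re]
        have : 0 ≤ w := Real.sqrt_nonneg _
        nlinarith
    · push_neg at hd
      set w := Real.sqrt (4*c - b^2) with hw
      have hw2 : (w:ℂ)^2 = 4*(c:ℂ) - (b:ℂ)^2 := by
        have := Real.sq_sqrt (by linarith : (0:ℝ) ≤ 4*c - b^2)
        exact_mod_cast this
      refine ⟨((-b/2 : ℝ) : ℂ) + ((w/2 : ℝ) : ℂ) * Complex.I, ?_, ?_⟩
      · have hI : (Complex.I)^2 = -1 := Complex.I_sq
        push_cast
        linear_combination ((w:ℂ)^2/4) * hI - (1/4 : ℂ) * hw2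
      · simp only [Complex.add_re, Complex.ofReal_re, Complex.mul_re, Complex.I_re,
          Complex.I_im, Complex.ofReal_im]
        nlinarith
  constructor
  · intro hroots
    by_contra hle
    push_neg at hle
    have hb : b ≤ 0 := by nlinarith [sq_nonneg r]
    obtain ⟨s, hs, hsre⟩ := hquad_root hb
    have : s.re < 0 := hroots s (by rw [hfac s, hs, mul_zero])
    linarith
  · intro hgt s hs
    have hb : 0 < b := by nlinarith [sq_nonneg r]
    rw [hfac s] at hs
    rcases mul_eq_zero.mp hs with h | h
    · have hsr : s = -(r:ℂ) := by linear_combination h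
      rw [hsr]
      simp only [Complex.neg_re, Complex.ofReal_re]
      linarith
    · exact hquad_neg s hb h


/-- For real `λ > 0` and positive gains, all roots of
`s³ + a₂ λ s² + a₁ λ s + a₀ λ` have negative real part iff `a₂ a₁ λ - a₀ > 0`. -/
theorem cubic_stability_iff (lam a0 a1 a2 : ℝ)
    (hlam : 0 < lam) (ha0 : 0 < a0) (ha1 : 0 < a1) (ha2 : 0 < a2) :
    (∀ s : ℂ, s ^ 3 + (a2 * lam : ℂ) * s ^ 2 + (a1 * lam : ℂ) * s + (a0 * lam : ℂ) = 0
      → s.re < 0) ↔ a2 * a1 * lam - a0 > 0 := by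
  have key := cubic_aux (a2*lam) (a1*lam) (a0*lam) (by positivity) (by positivity) (by positivity)
  have e : (∀ s : ℂ, s ^ 3 + (a2 * lam : ℂ) * s ^ 2 + (a1 * lam : ℂ) * s + (a0 * lam : ℂ) = 0
      → s.re < 0) ↔ (a2*lam) * (a1*lam) - a0*lam > 0 := by
    rw [← key]
    push_cast
    rfl
  rw [e]
  constructor <;> intro h <;> nlinarith
end

section
/- Let a_0, a_1, a_2 be fixed positive reals, and let (λ_2(N))_{N∈ℕ} be a sequence of positive reals with λ_2(N) → 0 as N → ∞. Then there exists a finite N̄ such that for all N > N̄, the polynomial s³ + a_2 λ_2(N) s² + a_1 λ_2(N) s + a_0 λ_2(N) has a root with nonnegative real part. -/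
open Complex Filter

/-- Quadratic s²+bs+c with b ≤ 0, c > 0 has a complex root with nonneg real part. -/
lemma quad_root (b c : ℝ) (hb : b ≤ 0) (hc : 0 < c) :
    ∃ s : ℂ, s ^ 2 + (b : ℂ) * s + (c : ℂ) = 0 ∧ 0 ≤ s.re := by
  rcases le_or_gt (4 * c - b ^ 2) 0 with hd | hd
  · -- real roots
    refine ⟨(((-b + Real.sqrt (b ^ 2 - 4 * c)) / 2 : ℝ) : ℂ), ?_, ?_⟩
    · have hw : Real.sqrt (b ^ 2 - 4 * c) ^ 2 = b ^ 2 - 4 * c :=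
        Real.sq_sqrt (by linarith)
      have : ((-b + Real.sqrt (b ^ 2 - 4 * c)) / 2) ^ 2
          + b * ((-b + Real.sqrt (b ^ 2 - 4 * c)) / 2) + c = 0 := by nlinarith [hw]
      exact_mod_cast this
    · simp only [Complex.ofReal_re]
      have := Real.sqrt_nonneg (b ^ 2 - 4 * c)
      linarith
  · -- complex roots
    set w := Real.sqrt (4 * c - b ^ 2) with hwdef
    have hw : (w : ℝ) ^ 2 = 4 * c - b ^ 2 := Real.sq_sqrt (by linarith)
    refine ⟨((-b / 2 : ℝ) : ℂ) + ((w / 2 : ℝ) : ℂ) * Complex.I, ?_, ?_⟩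
    · have hwC : ((w : ℂ)) ^ 2 = ((4 * c - b ^ 2 : ℝ) : ℂ) := by exact_mod_cast congrArg Complex.ofReal hw
      push_cast at hwC ⊢
      linear_combination (Complex.I ^ 2 / 4) * hwC + ((4 * (c:ℂ) - (b:ℂ) ^ 2) / 4) * Complex.I_sq
    · simp
      linarith

lemma cubic_root (c0 c1 c2 : ℝ) (h0 : 0 < c0) (h1 : 0 < c1) (h2 : 0 < c2)
    (h : c1 * c2 ≤ c0) :
    ∃ s : ℂ, s ^ 3 + (c2 : ℂ) * s ^ 2 + (c1 : ℂ) * s + (c0 : ℂ) = 0 ∧ 0 ≤ s.re := by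
  set p : ℝ → ℝ := fun x => x ^ 3 + c2 * x ^ 2 + c1 * x + c0 with hp
  set M : ℝ := c2 + c1 + c0 + 1 with hM
  have hM1 : 1 ≤ M := by nlinarith
  have hpM : p (-M) ≤ 0 := by
    simp only [hp]
    nlinarith [sq_nonneg M, sq_nonneg (M - 1)]
  have hpc2 : 0 ≤ p (-c2) := by simp only [hp]; nlinarith
  have hcont : ContinuousOn p (Set.Icc (-M) (-c2)) := by fun_prop
  have hle : (-M : ℝ) ≤ -c2 := by nlinarith
  obtain ⟨r, hrmem, hr⟩ := intermediate_value_Icc hle hcont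
    (show (0:ℝ) ∈ Set.Icc (p (-M)) (p (-c2)) from ⟨hpM, hpc2⟩)
  have hrle : r ≤ -c2 := hrmem.2
  have hrneg : r < 0 := lt_of_le_of_lt hrle (by linarith)
  have hreq : r ^ 3 + c2 * r ^ 2 + c1 * r + c0 = 0 := hr
  set b : ℝ := c2 + r with hb
  set c : ℝ := c1 + r * b with hcc
  have hbneg : b ≤ 0 := by linarith
  have hcpos : 0 < c := by
    have : -(r * c) = c0 := by simp only [hcc, hb]; nlinarith [hreq]
    nlinarith
  obtain ⟨s, hs, hsre⟩ := quad_root b c hbneg hcpos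
  refine ⟨s, ?_, hsre⟩
  have hrC : (r : ℂ) ^ 3 + (c2 : ℂ) * r ^ 2 + (c1 : ℂ) * r + (c0 : ℂ) = 0 := by
    exact_mod_cast congrArg Complex.ofReal hreq
  have hbC : (b : ℂ) = (c2 : ℂ) + r := by push_cast [hb]; ring
  have hcC : (c : ℂ) = (c1 : ℂ) + r * ((c2 : ℂ) + r) := by push_cast [hcc, hb]; ring
  rw [hbC, hcC] at hs
  linear_combination (s - (r : ℂ)) * hs + hrC

/-- If the algebraic connectivity `λ₂(N)` tends to zero, then beyond some finite
network size the third-order characteristic polynomial has a root with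
nonnegative real part. -/
theorem third_order_consensus_inadmissible (a0 a1 a2 : ℝ)
    (ha0 : 0 < a0) (ha1 : 0 < a1) (ha2 : 0 < a2)
    (lam2 : ℕ → ℝ) (hpos : ∀ N, 0 < lam2 N)
    (hlim : Tendsto lam2 atTop (nhds 0)) :
    ∃ Nbar : ℕ, ∀ N > Nbar,
      ∃ s : ℂ, s ^ 3 + (a2 * lam2 N : ℂ) * s ^ 2 + (a1 * lam2 N : ℂ) * s
        + (a0 * lam2 N : ℂ) = 0 ∧ 0 ≤ s.re := by
  have hev : ∀ᶠ N in atTop, lam2 N < a0 / (a1 * a2) := by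
    have := hlim.eventually (gt_mem_nhds (show (0:ℝ) < a0 / (a1 * a2) by positivity))
    exact this
  obtain ⟨Nbar, hNbar⟩ := eventually_atTop.mp hev
  refine ⟨Nbar, fun N hN => ?_⟩
  have hl := hpos N
  have hlt : lam2 N < a0 / (a1 * a2) := hNbar N (le_of_lt hN)
  have hle : (a1 * lam2 N) * (a2 * lam2 N) ≤ a0 * lam2 N := by
    have h' : lam2 N * (a1 * a2) < a0 := (lt_div_iff₀ (by positivity)).mp hlt
    nlinarith
  obtain ⟨s, h1, h2⟩ := cubic_root (a0 * lam2 N) (a1 * lam2 N) (a2 * lam2 N)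
    (by positivity) (by positivity) (by positivity) hle
  refine ⟨s, ?_, h2⟩
  push_cast at h1 ⊢
  exact h1
end

section
/- Let L be an N×N complex matrix with eigenvalues λ_1, ..., λ_N (with multiplicity), and let a_0, ..., a_{n−1} be scalars. Form the nN×nN block companion matrix A with blocks: A has identity blocks I_N on the superdiagonal positions (i, i+1) for i = 1,...,n−1, bottom block row (−a_0 L, −a_1 L, ..., −a_{n−1} L), and zeros elsewhere. Then the characteristic polynomial of A is det(sI − A) = ∏_{l=1}^{N} (s^n + a_{n−1} λ_l s^{n−1} + ... + a_1 λ_l s + a_0 λ_l); equivalently, the spectrum of A is the union over l of the roots of s^n + λ_l (a_{n−1} s^{n−1} + ... + a_1 s + a_0). -/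
/-!
Right multiplication of `X - A` by the block lower triangular matrix `(X ^ (i - j) • 1)ᵢⱼ`,
of determinant one, clears each block row above the last one down to a single `-1` block on
the block superdiagonal, and leaves `X ^ n • 1 + q • L` with `q = ∑ₖ aₖ Xᵏ` in the bottom left
corner. Hence `det (X - A) = det (X ^ n • 1 + q • L)`. Over the fraction field of `ℂ[X]` this
matrix is `-q • (t • 1 - L)` with `t = -X ^ n / q`, whose determinant is
`(-q) ^ N ∏ₗ (t - λₗ) = ∏ₗ (X ^ n + λₗ q)`.
-/

open Matrix Polynomial

/-- The closed-loop matrix of `n`-th order consensus: block companion matrix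
with identity blocks on the block superdiagonal and bottom block row
`(-a₀ L, -a₁ L, …, -a_{n-1} L)`. -/
def blockCompanion {R : Type*} [CommRing R] (n N : ℕ) (a : Fin n → R)
    (L : Matrix (Fin N) (Fin N) R) :
    Matrix (Fin n × Fin N) (Fin n × Fin N) R :=
  fun p q =>
    if p.1.val + 1 = q.1.val then (if p.2 = q.2 then 1 else 0)
    else if p.1.val = n - 1 then -(a q.1) * L p.2 q.2
    else 0

open scoped Kronecker

namespace Matrix

variable {S ι : Type*} [CommRing S] [Fintype ι] [DecidableEq ι]

theorem det_toSquareBlock_fst {α : Type*} [Fintype α] [DecidableEq α]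
    (M : Matrix (α × ι) (α × ι) S) (k : α) :
    (M.toSquareBlock Prod.fst k).det = (of fun x y => M (k, x) (k, y)).det := by
  let e : ι ≃ {p : α × ι // p.1 = k} :=
    { toFun x := ⟨(k, x), rfl⟩
      invFun p := p.1.2
      left_inv _ := rfl
      right_inv p := Subtype.ext (Prod.ext p.2.symm rfl) }
  rw [← det_submatrix_equiv_self e]
  rfl

theorem det_eq_det_corner_of_rows_eq_neg_shift {m : ℕ}
    (M : Matrix (Fin (m + 1) × ι) (Fin (m + 1) × ι) S)
    (hM : ∀ (i : Fin m) (x : ι) (j : Fin (m + 1)) (y : ι),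
      M (i.castSucc, x) (j, y) = if j = i.succ ∧ x = y then -1 else 0) :
    M.det = (of fun x y => M (Fin.last m, x) (0, y)).det := by
  -- `σ` moves the bottom block row to the top and every other block row one step down.
  set σ : Equiv.Perm (Fin (m + 1) × ι) :=
    Equiv.prodCongrLeft fun _ => (finRotate (m + 1)).symm
  have hσ_zero : ∀ x, σ (0, x) = (Fin.last m, x) := fun x => by
    simp only [σ, Equiv.prodCongrLeft_apply, Prod.mk.injEq, and_true]
    rw [Equiv.symm_apply_eq, finRotate_last]
  have hσ_succ : ∀ (i : Fin m) x, σ (i.succ, x) = (i.castSucc, x) := fun i x => by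
    simp only [σ, Equiv.prodCongrLeft_apply, Prod.mk.injEq, and_true]
    rw [Equiv.symm_apply_eq, Fin.ext_iff, coe_finRotate_of_ne_last (Fin.castSucc_lt_last i).ne]
    simp
  have htri : (M.submatrix σ id).BlockTriangular Prod.fst := by
    rintro ⟨k, x⟩ ⟨j, y⟩ (hjk : j < k)
    obtain ⟨i, rfl⟩ := Fin.exists_succ_eq.2 (Fin.ne_zero_of_lt hjk)
    rw [submatrix_apply, hσ_succ, id, hM, if_neg fun h => hjk.ne h.1]
  have hsign : ((Equiv.Perm.sign σ : ℤ) : S) = (-1) ^ (m * Fintype.card ι) := by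
    simp [σ, Equiv.Perm.sign_prodCongrLeft, sign_finRotate, pow_mul]
  have hblocks : (M.submatrix σ id).det
      = (-1) ^ (m * Fintype.card ι) * (of fun x y => M (Fin.last m, x) (0, y)).det := by
    rw [htri.det_fintype, Fin.prod_univ_succ, mul_comm]
    simp_rw [det_toSquareBlock_fst]
    have hneg : ∀ i : Fin m, (of fun x y => M.submatrix σ id (i.succ, x) (i.succ, y)) = -1 := by
      intro i; ext x y
      by_cases hxy : x = y <;> simp [hσ_succ, hM, hxy]
    have hcorner : (of fun x y => M.submatrix σ id (0, x) (0, y))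
        = of fun x y => M (Fin.last m, x) (0, y) := by
      ext x y; simp [hσ_zero]
    simp only [hneg, hcorner, det_neg, det_one, mul_one, Finset.prod_const, Finset.card_univ,
      Fintype.card_fin, pow_mul']
  have hsq : ((-1 : S) ^ (m * Fintype.card ι)) * (-1) ^ (m * Fintype.card ι) = 1 := by
    rw [← mul_pow]; simp
  rw [det_permute, hsign] at hblocks
  rw [← one_mul M.det, ← hsq, mul_assoc, hblocks, ← mul_assoc, hsq, one_mul]

def lowerPowers (n : ℕ) (s : S) : Matrix (Fin n) (Fin n) S :=
  of fun i j => if j ≤ i then s ^ (i - j : ℕ) else 0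

theorem det_lowerPowers (n : ℕ) (s : S) : (lowerPowers n s).det = 1 := by
  rw [det_of_isLowerTriangular (lowerPowers n s) fun i j (hij : i < j) => if_neg hij.not_ge]
  simp [lowerPowers]

theorem mul_kronecker_one_apply {κ α β : Type*} [Fintype α] (M : Matrix κ (α × ι) S)
    (P : Matrix α β S) (r : κ) (j : β) (y : ι) :
    (M * (P ⊗ₖ (1 : Matrix ι ι S))) r (j, y) = ∑ k, M r (k, y) * P k j := by
  simp [mul_apply, Fintype.sum_prod_type, one_apply]

theorem det_smul_one_add_smul_eq_prod [IsDomain S] (M : Matrix ι ι S) (μ : ι → S) (hM : M.charpoly = ∏ i, (X - C (μ i)))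
    (u v : S) :
    (u • (1 : Matrix ι ι S) + v • M).det = ∏ i, (u + v * μ i) := by
  by_cases hv : v = 0
  · simp [hv]
  let φ := algebraMap S (FractionRing S)
  have hφv : φ v ≠ 0 := (map_ne_zero_iff φ (IsFractionRing.injective S _)).2 hv
  set t := -(φ u / φ v)
  have hmap : (u • (1 : Matrix ι ι S) + v • M).map φ = (-φ v) • (scalar ι t - M.map φ) := by
    ext i j
    by_cases hij : i = j
    · subst hij
      simp only [map_apply, add_apply, smul_apply, one_apply_eq, smul_eq_mul, mul_one, map_add,
        map_mul, scalar_apply, sub_apply, diagonal_apply_eq, neg_mul, t]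
      field_simp
      ring
    · simp [hij, one_apply_ne hij]
  apply IsFractionRing.injective S (FractionRing S)
  rw [RingHom.map_det, RingHom.mapMatrix_apply, hmap, det_smul, ← eval_charpoly, charpoly_map, hM,
    Polynomial.map_prod, eval_prod, map_prod, ← Finset.card_univ, ← Finset.prod_const,
    ← Finset.prod_mul_distrib]
  refine Finset.prod_congr rfl fun i _ => ?_
  simp only [Polynomial.map_sub, map_X, map_C, eval_sub, eval_X, eval_C, map_add, map_mul, t]
  field_simp
  ring

end Matrix

section blockCompanion

variable {R : Type*} [CommRing R] {m N : ℕ} (a : Fin (m + 1) → R) (L : Matrix (Fin N) (Fin N) R)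

theorem blockCompanion_apply_castSucc (i : Fin m) (x : Fin N) (k : Fin (m + 1)) (y : Fin N) :
    blockCompanion (m + 1) N a L (i.castSucc, x) (k, y) = if k = i.succ ∧ x = y then 1 else 0 := by
  have hi : (i : ℕ) ≠ m + 1 - 1 := by simp [i.is_lt.ne]
  simp only [blockCompanion, Fin.val_castSucc, if_neg hi, Fin.ext_iff, Fin.val_succ,
    eq_comm (a := (i : ℕ) + 1)]
  split_ifs <;> simp_all

theorem blockCompanion_apply_last (x : Fin N) (k : Fin (m + 1)) (y : Fin N) :
    blockCompanion (m + 1) N a L (Fin.last m, x) (k, y) = -(a k * L x y) := by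
  have hk : m + 1 ≠ (k : ℕ) := k.is_lt.ne'
  simp [blockCompanion, hk]

theorem charmatrix_blockCompanion_castSucc (i : Fin m) (x : Fin N) (k : Fin (m + 1)) (y : Fin N) :
    charmatrix (blockCompanion (m + 1) N a L) (i.castSucc, x) (k, y)
      = if x = y then (if k = i.castSucc then X else 0) - (if k = i.succ then 1 else 0) else 0 := by
  rw [charmatrix_apply, blockCompanion_apply_castSucc, diagonal_apply]
  by_cases hxy : x = y <;> by_cases hk : k = i.castSucc <;>
    simp [hxy, hk, eq_comm (b := k), apply_ite C]

theorem charmatrix_blockCompanion_last (x : Fin N) (k : Fin (m + 1)) (y : Fin N) :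
    charmatrix (blockCompanion (m + 1) N a L) (Fin.last m, x) (k, y)
      = (if k = Fin.last m ∧ x = y then X else 0) + C (a k * L x y) := by
  rw [charmatrix_apply, blockCompanion_apply_last, diagonal_apply, map_neg, sub_neg_eq_add]
  simp [eq_comm (b := k), and_comm]

theorem charmatrix_blockCompanion_mul_apply_castSucc (i : Fin m) (x : Fin N) (j : Fin (m + 1))
    (y : Fin N) :
    (charmatrix (blockCompanion (m + 1) N a L) *
      (lowerPowers (m + 1) (X : R[X]) ⊗ₖ (1 : Matrix (Fin N) (Fin N) R[X]))) (i.castSucc, x) (j, y)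
      = if j = i.succ ∧ x = y then -1 else 0 := by
  simp only [mul_kronecker_one_apply, charmatrix_blockCompanion_castSucc]
  by_cases hxy : x = y
  · simp only [hxy, if_true, and_true, sub_mul, ite_mul, zero_mul, one_mul,
      Finset.sum_sub_distrib, Finset.sum_ite_eq', Finset.mem_univ, lowerPowers, of_apply]
    by_cases hj : j ≤ i.castSucc
    · have hj' : j ≤ i.succ := hj.trans (Fin.castSucc_le_succ i)
      have hne : j ≠ i.succ := (hj.trans_lt Fin.castSucc_lt_succ).ne
      have hexp : (i.succ : ℕ) - j = (i.castSucc : ℕ) - j + 1 := by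
        rw [Fin.le_iff_val_le_val, Fin.val_castSucc] at hj
        simp only [Fin.val_succ, Fin.val_castSucc]
        omega
      rw [if_pos hj, if_pos hj', if_neg hne, hexp, pow_succ', sub_self]
    · by_cases hs : j = i.succ
      · subst hs
        simp
      · have hj' : ¬j ≤ i.succ := fun h => hj (Fin.le_castSucc_iff.2 (lt_of_le_of_ne h hs))
        rw [if_neg hj, if_neg hj', if_neg hs, mul_zero, sub_zero]
  · simp [hxy]

theorem charmatrix_blockCompanion_mul_apply_last_zero (x y : Fin N) :
    (charmatrix (blockCompanion (m + 1) N a L) *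
      (lowerPowers (m + 1) (X : R[X]) ⊗ₖ (1 : Matrix (Fin N) (Fin N) R[X]))) (Fin.last m, x) (0, y)
      = ((X ^ (m + 1) : R[X]) • (1 : Matrix (Fin N) (Fin N) R[X])
          + (∑ k, C (a k) * X ^ (k : ℕ)) • L.map C) x y := by
  simp only [mul_kronecker_one_apply, charmatrix_blockCompanion_last, lowerPowers, of_apply]
  by_cases hxy : x = y
  · simp [hxy, add_mul, Finset.sum_add_distrib, Finset.sum_mul, pow_succ']
  · simp [hxy, Finset.sum_mul]

end blockCompanion

theorem charpoly_blockCompanion_eq_det {R : Type*} [CommRing R] (n N : ℕ) (a : Fin n → R)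
    (L : Matrix (Fin N) (Fin N) R) :
    (blockCompanion n N a L).charpoly
      = ((X ^ n : R[X]) • (1 : Matrix (Fin N) (Fin N) R[X])
          + (∑ k, C (a k) * X ^ (k : ℕ)) • L.map C).det := by
  cases n with
  | zero => simp
  | succ m =>
    have hW : (lowerPowers (m + 1) (X : R[X]) ⊗ₖ (1 : Matrix (Fin N) (Fin N) R[X])).det = 1 := by
      rw [det_kronecker, det_lowerPowers, det_one, one_pow, one_pow, mul_one]
    rw [charpoly, ← mul_one (charmatrix _).det, ← hW, ← det_mul,
      det_eq_det_corner_of_rows_eq_neg_shift _ (charmatrix_blockCompanion_mul_apply_castSucc a L)]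
    congr 1
    exact Matrix.ext fun x y => charmatrix_blockCompanion_mul_apply_last_zero a L x y

theorem charpoly_blockCompanion_general (n N : ℕ)
    (a : Fin n → ℂ) (L : Matrix (Fin N) (Fin N) ℂ) (lam : Fin N → ℂ)
    (hlam : L.charpoly = ∏ l : Fin N, (X - C (lam l))) :
    (blockCompanion n N a L).charpoly
      = ∏ l : Fin N, (X ^ n + C (lam l) * ∑ k : Fin n, C (a k) * X ^ (k : ℕ)) := by
  have hlam' : (L.map C).charpoly = ∏ l, (X - C (C (lam l))) := by
    simp [charpoly_map, hlam, Polynomial.map_prod]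
  rw [charpoly_blockCompanion_eq_det, det_smul_one_add_smul_eq_prod _ _ hlam']
  exact Finset.prod_congr rfl fun l _ => by ring

/-- The characteristic polynomial of the block companion closed-loop matrix is
`∏ₗ (sⁿ + λₗ (a_{n-1} s^{n-1} + … + a₁ s + a₀))`, where `λₗ` are the
eigenvalues of `L` with multiplicity. -/
theorem charpoly_blockCompanion (n N : ℕ) (hn : 1 ≤ n)
    (a : Fin n → ℂ) (L : Matrix (Fin N) (Fin N) ℂ) (lam : Fin N → ℂ)
    (hlam : L.charpoly = ∏ l : Fin N, (X - C (lam l))) :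
    (blockCompanion n N a L).charpoly
      = ∏ l : Fin N, (X ^ n + C (lam l) * ∑ k : Fin n, C (a k) * X ^ (k : ℕ)) :=
  charpoly_blockCompanion_general n N a L lam hlam
end

section
/- Let L be a real symmetric positive semidefinite N×N matrix with simple eigenvalue 0 and second-smallest eigenvalue λ_2 > 0, and let a_0, a_1, a_2 > 0 with a_2 a_1 λ_2 > a_0. Then all eigenvalues of the 3N×3N matrix A = [[0,I,0],[0,0,I],[−a_0 L, −a_1 L, −a_2 L]] other than its three zero eigenvalues have negative real part. -/
open Matrix

/-- Routh–Hurwitz for a real cubic: if all coefficients are positive and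
`b₂ b₁ > b₀`, then every complex root has negative real part. -/
lemma cubic_hurwitz (b0 b1 b2 : ℝ) (h0 : 0 < b0) (h1 : 0 < b1) (h2 : 0 < b2)
    (hRH : b0 < b2 * b1) (μ : ℂ) (heq : μ^3 + b2*μ^2 + b1*μ + b0 = 0) : μ.re < 0 := by
  by_contra hx
  push_neg at hx
  have hre := congrArg Complex.re heq
  have him := congrArg Complex.im heq
  simp [pow_succ, Complex.mul_re, Complex.mul_im, Complex.add_re, Complex.add_im,
    Complex.ofReal_re, Complex.ofReal_im] at hre him
  set x := μ.re with hxdef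
  set y := μ.im with hydef
  rcases eq_or_ne y 0 with hy | hy
  · rw [hy] at hre
    nlinarith [sq_nonneg x, mul_nonneg (mul_nonneg hx hx) hx]
  · have him' : 3*x^2 - y^2 + 2*b2*x + b1 = 0 := by
      have h : y * (3*x^2 - y^2 + 2*b2*x + b1) = 0 := by nlinarith [him]
      rcases mul_eq_zero.mp h with h | h
      · exact absurd h hy
      · exact h
    nlinarith [sq_nonneg x, sq_nonneg y, mul_nonneg hx (sq_nonneg x),
      mul_nonneg h2.le (sq_nonneg x), mul_nonneg h1.le hx,
      mul_nonneg (mul_nonneg h2.le h2.le) hx]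

/-- A spectral value of a complex matrix admits an eigenvector. -/
lemma spec_eigen {n : Type*} [Fintype n] [DecidableEq n] (M : Matrix n n ℂ) (μ : ℂ) (h : μ ∈ spectrum ℂ M) :
    ∃ v : n → ℂ, v ≠ 0 ∧ M *ᵥ v = μ • v := by
  rw [spectrum.mem_iff, Matrix.isUnit_iff_isUnit_det, isUnit_iff_ne_zero, not_ne_iff] at h
  obtain ⟨v, hv, h0⟩ := (Matrix.exists_mulVec_eq_zero_iff).mpr h
  refine ⟨v, hv, ?_⟩
  rw [Matrix.sub_mulVec, sub_eq_zero] at h0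
  rw [← h0]
  have : (algebraMap ℂ (Matrix n n ℂ)) μ = μ • (1 : Matrix n n ℂ) := by
    rw [Algebra.algebraMap_eq_smul_one]
  rw [this, Matrix.smul_mulVec, Matrix.one_mulVec]

/-- A real number that is a complex eigenvalue of (the complexification of) a real
matrix lies in its real spectrum. -/
lemma eigen_spec_real {n : Type*} [Fintype n] [DecidableEq n] (M : Matrix n n ℝ) (r : ℝ) (v : n → ℂ)
    (hv : v ≠ 0) (h : (M.map (fun x => (x:ℂ))) *ᵥ v = (r:ℂ) • v) : r ∈ spectrum ℝ M := by
  rw [spectrum.mem_iff, Matrix.isUnit_iff_isUnit_det, isUnit_iff_ne_zero, not_ne_iff]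
  have hdetC : (((algebraMap ℝ (Matrix n n ℝ)) r - M).map (fun x => (x:ℂ))).det = 0 := by
    rw [← Matrix.exists_mulVec_eq_zero_iff]
    refine ⟨v, hv, ?_⟩
    have hmap : ((algebraMap ℝ (Matrix n n ℝ)) r - M).map (fun x => (x:ℂ))
        = (r:ℂ) • (1 : Matrix n n ℂ) - M.map (fun x => (x:ℂ)) := by
      ext i j
      simp [Matrix.algebraMap_matrix_apply, Matrix.smul_apply, Matrix.one_apply, apply_ite]
    rw [hmap, Matrix.sub_mulVec, h, Matrix.smul_mulVec, Matrix.one_mulVec, sub_self]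
  have : (((algebraMap ℝ (Matrix n n ℝ)) r - M).map (fun x => (x:ℂ))).det
      = (((algebraMap ℝ (Matrix n n ℝ)) r - M).det : ℂ) := by
    rw [show (fun x : ℝ => (x:ℂ)) = ⇑Complex.ofRealHom from rfl]
    exact (RingHom.map_det Complex.ofRealHom _).symm
  rw [this] at hdetC
  exact_mod_cast hdetC

/-- Sufficiency for undirected third-order consensus: if `a₂ a₁ λ₂ > a₀`, then
all eigenvalues of the closed-loop matrix other than the zero eigenvalues have
negative real part. -/
theorem third_order_consensus_stable (N : ℕ)
    (L : Matrix (Fin N) (Fin N) ℝ) (hL : L.PosSemidef)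
    (hsimple : (L.charpoly).rootMultiplicity 0 = 1)
    (lam2 : ℝ) (hlam2pos : 0 < lam2) (hmem : lam2 ∈ spectrum ℝ L)
    (hmin : ∀ μ ∈ spectrum ℝ L, μ = 0 ∨ lam2 ≤ μ)
    (a0 a1 a2 : ℝ) (ha0 : 0 < a0) (ha1 : 0 < a1) (ha2 : 0 < a2)
    (hRH : a2 * a1 * lam2 > a0) :
    ∀ μ ∈ spectrum ℂ
      ((blockCompanion 3 N ![a0, a1, a2] L).map (fun r => (r : ℂ))),
      μ ≠ 0 → μ.re < 0 := by
  intro μ hμ hμ0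
  obtain ⟨v, hv0, hAv⟩ := spec_eigen _ μ hμ
  set Lc : Matrix (Fin N) (Fin N) ℂ := L.map (fun r => (r:ℂ)) with hLc
  -- componentwise equations
  have e0 : ∀ p, v (1, p) = μ * v (0, p) := by
    intro p
    have h := congrFun hAv (0, p)
    rw [Matrix.mulVec, dotProduct, Fintype.sum_prod_type, Fin.sum_univ_three] at h
    simp only [blockCompanion, Matrix.map_apply] at h
    simp [apply_ite (fun x:ℝ => (x:ℂ)), ite_mul, one_mul, zero_mul,
      Finset.sum_ite_eq, Pi.smul_apply, smul_eq_mul] at h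
    simpa using h
  have e1 : ∀ p, v (2, p) = μ * v (1, p) := by
    intro p
    have h := congrFun hAv (1, p)
    rw [Matrix.mulVec, dotProduct, Fintype.sum_prod_type, Fin.sum_univ_three] at h
    simp only [blockCompanion, Matrix.map_apply] at h
    simp [apply_ite (fun x:ℝ => (x:ℂ)), ite_mul, one_mul, zero_mul,
      Finset.sum_ite_eq, Pi.smul_apply, smul_eq_mul] at h
    simpa using h
  have e2 : ∀ p, -((a0:ℂ) * (Lc *ᵥ fun q => v (0, q)) p
      + (a1:ℂ) * (Lc *ᵥ fun q => v (1, q)) p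
      + (a2:ℂ) * (Lc *ᵥ fun q => v (2, q)) p) = μ * v (2, p) := by
    intro p
    have h := congrFun hAv (2, p)
    rw [Matrix.mulVec, dotProduct, Fintype.sum_prod_type, Fin.sum_univ_three] at h
    simp only [blockCompanion, Matrix.map_apply] at h
    simp [apply_ite (fun x:ℝ => (x:ℂ)), ite_mul, one_mul, zero_mul,
      Finset.sum_ite_eq, Pi.smul_apply, smul_eq_mul] at h
    rw [← h]
    simp [hLc, Matrix.mulVec, dotProduct, Finset.mul_sum, mul_assoc, neg_add,
      ← Finset.sum_neg_distrib]
    ring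
  -- the first block of the eigenvector
  set x0 : Fin N → ℂ := fun p => v (0, p) with hx0def
  have hx0 : x0 ≠ 0 := by
    intro hz
    apply hv0
    funext w
    obtain ⟨i, p⟩ := w
    have h00 : v (0, p) = 0 := congrFun hz p
    fin_cases i
    · exact h00
    · show v (1, p) = 0
      rw [e0, h00, mul_zero]
    · show v (2, p) = 0
      rw [e1, e0, h00, mul_zero, mul_zero]
  obtain ⟨p0, hp0⟩ : ∃ p, x0 p ≠ 0 := by
    by_contra hall
    push_neg at hall
    exact hx0 (funext hall)
  -- reduce to an eigenvalue equation for L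
  have hv1 : (fun q => v (1, q)) = μ • x0 := by
    funext q; simp [e0 q, hx0def]
  have hv2 : (fun q => v (2, q)) = (μ * μ) • x0 := by
    funext q; simp [e1 q, e0 q, hx0def, mul_assoc]
  set c : ℂ := (a0:ℂ) + (a1:ℂ) * μ + (a2:ℂ) * μ^2 with hc
  have key : ∀ p, c * (Lc *ᵥ x0) p = -(μ^3) * x0 p := by
    intro p
    have h := e2 p
    rw [hv1, hv2, Matrix.mulVec_smul, Matrix.mulVec_smul] at h
    have h2 : v (2, p) = (μ * μ) * x0 p := by rw [e1, e0]; ring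
    rw [h2] at h
    simp only [Pi.smul_apply, smul_eq_mul, hx0def] at h ⊢
    rw [hc]
    linear_combination -h
  have hcne : c ≠ 0 := by
    intro hc0
    have h := key p0
    rw [hc0, zero_mul] at h
    have : μ^3 = 0 := by
      rcases mul_eq_zero.mp h.symm with h' | h'
      · exact neg_eq_zero.mp h'
      · exact absurd h' hp0
    exact hμ0 (pow_eq_zero_iff (by norm_num) |>.mp this)
  set lam : ℂ := -(μ^3) / c with hlam
  have hLx0 : Lc *ᵥ x0 = lam • x0 := by
    funext p
    have h := key p
    rw [hlam, Pi.smul_apply, smul_eq_mul]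
    field_simp
    linear_combination h
  -- lam is real
  have hsym : ∀ p q, L p q = L q p := by
    intro p q
    have h := congrFun (congrFun hL.1 q) p
    simpa [Matrix.conjTranspose_apply] using h
  set s : ℂ := ∑ p, (starRingEnd ℂ) (x0 p) * x0 p with hs
  set d : ℂ := ∑ p, (starRingEnd ℂ) (x0 p) * (Lc *ᵥ x0) p with hd
  have hsre : s = ((∑ p, Complex.normSq (x0 p) : ℝ) : ℂ) := by
    rw [hs]
    push_cast
    congr 1
    funext p
    rw [mul_comm, Complex.mul_conj]
  have hspos : 0 < ∑ p, Complex.normSq (x0 p) := by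
    apply Finset.sum_pos'
    · intro i _; exact Complex.normSq_nonneg _
    · exact ⟨p0, Finset.mem_univ _, Complex.normSq_pos.mpr hp0⟩
  have hdreal : (starRingEnd ℂ) d = d := by
    rw [hd]
    simp only [hLc, Matrix.mulVec, dotProduct, Matrix.map_apply, Finset.mul_sum,
      map_sum, _root_.map_mul, Complex.conj_ofReal, Complex.conj_conj]
    rw [Finset.sum_comm]
    apply Finset.sum_congr rfl
    intro p _
    apply Finset.sum_congr rfl
    intro q _
    rw [hsym q p]
    ring
  have hds : d = lam * s := by
    rw [hd, hs, hLx0, Finset.mul_sum]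
    apply Finset.sum_congr rfl
    intro p _
    rw [Pi.smul_apply, smul_eq_mul]
    ring
  have hlamim : lam.im = 0 := by
    have him : d.im = 0 := by
      have := congrArg Complex.im hdreal
      simpa [Complex.conj_im] using by linarith [congrArg Complex.im hdreal, Complex.conj_im d]
    have hsim : s.im = 0 := by rw [hsre]; simp
    have hsre' : s.re = ∑ p, Complex.normSq (x0 p) := by rw [hsre]; simp
    have h := congrArg Complex.im hds
    rw [Complex.mul_im, hsim, hsre'] at h
    have : lam.im * (∑ p, Complex.normSq (x0 p)) = 0 := by
      rw [him] at h; linarith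
    rcases mul_eq_zero.mp this with h | h
    · exact h
    · exact absurd h (ne_of_gt hspos)
  set lr : ℝ := lam.re with hlr
  have hlamr : lam = (lr : ℂ) := Complex.ext (by simp [hlr]) (by simp [hlamim])
  -- lr is in the real spectrum of L
  have hspec : lr ∈ spectrum ℝ L := by
    apply eigen_spec_real L lr x0 hx0
    rw [← hlamr]
    exact hLx0
  have hlamne : lam ≠ 0 := by
    intro h
    rw [hlam, div_eq_zero_iff] at h
    rcases h with h | h
    · exact hμ0 (pow_eq_zero_iff (by norm_num) |>.mp (neg_eq_zero.mp h))
    · exact hcne h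
  have hlrge : lam2 ≤ lr := by
    rcases hmin lr hspec with h | h
    · exfalso; apply hlamne; rw [hlamr, h]; simp
    · exact h
  have hlrpos : 0 < lr := lt_of_lt_of_le hlam2pos hlrge
  -- the cubic equation
  have heq : μ^3 + ((a2*lr : ℝ):ℂ)*μ^2 + ((a1*lr : ℝ):ℂ)*μ + ((a0*lr : ℝ):ℂ) = 0 := by
    have h : lam * c = -(μ^3) := by
      rw [hlam]; field_simp
    rw [hlamr, hc] at h
    push_cast
    linear_combination h
  exact cubic_hurwitz (a0*lr) (a1*lr) (a2*lr)
    (mul_pos ha0 hlrpos) (mul_pos ha1 hlrpos) (mul_pos ha2 hlrpos)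
    (by nlinarith [mul_pos (mul_pos ha2 ha1) hlrpos]) μ heq
end
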